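/- For every n ≥ 3, the descending staircase E_n is not strongly brodable. -/

import Mathlib

/-- Two vertices of `ℤ²` are adjacent if their Euclidean distance is `1`. -/
def Adj (u v : ℤ × ℤ) : Prop := (u.1 - v.1) ^ 2 + (u.2 - v.2) ^ 2 = 1

/-- The inferior diagonal of the cell `(a, b)`: the unordered pair `{(a,b), (a+1,b+1)}`. -/
def infDiag (c : ℤ × ℤ) : Sym2 (ℤ × ℤ) := s(c, (c.1 + 1, c.2 + 1))

/-- The superior diagonal of the cell `(a, b)`: the unordered pair `{(a,b+1), (a+1,b)}`. -/
def supDiag (c : ℤ × ℤ) : Sym2 (ℤ × ℤ) := s((c.1, c.2 + 1), (c.1 + 1, c.2))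

/-- The unordered pair underlying an ordered pair of vertices. -/
def diagOf (e : (ℤ × ℤ) × (ℤ × ℤ)) : Sym2 (ℤ × ℤ) := s(e.1, e.2)

/-- `d 0, d 1, …, d (2n - 1)` (with `n = C.card`) is an embroidery of the
configuration `C`. -/
def IsEmbroidery (C : Finset (ℤ × ℤ)) (d : ℕ → (ℤ × ℤ) × (ℤ × ℤ)) : Prop :=
  (∀ i < 2 * C.card, ∃ c ∈ C, diagOf (d i) = infDiag c ∨ diagOf (d i) = supDiag c) ∧
  (∀ c ∈ C, ∃! i, i < 2 * C.card ∧ diagOf (d i) = infDiag c) ∧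
  (∀ c ∈ C, ∃! i, i < 2 * C.card ∧ diagOf (d i) = supDiag c) ∧
  (∀ c ∈ C, ∀ i j, i < 2 * C.card → j < 2 * C.card →
    diagOf (d i) = infDiag c → diagOf (d j) = supDiag c → i < j) ∧
  (∀ i, i + 1 < 2 * C.card → Adj (d i).2 (d (i + 1)).1)

/-- A closed embroidery: moreover the end of the last diagonal is adjacent to the
start of the first one. -/
def IsClosedEmbroidery (C : Finset (ℤ × ℤ)) (d : ℕ → (ℤ × ℤ) × (ℤ × ℤ)) : Prop :=
  IsEmbroidery C d ∧ Adj (d (2 * C.card - 1)).2 (d 0).1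

/-- A configuration is brodable if it admits an embroidery. -/
def Brodable (C : Finset (ℤ × ℤ)) : Prop := ∃ d, IsEmbroidery C d

/-- A configuration is strongly brodable if it admits a closed embroidery. -/
def StronglyBrodable (C : Finset (ℤ × ℤ)) : Prop := ∃ d, IsClosedEmbroidery C d

/-- The descending staircase `E_n = {(i, -i) : 0 ≤ i < n}`. -/
def staircase (n : ℕ) : Finset (ℤ × ℤ) :=
  (Finset.range n).image (fun i : ℕ => ((i : ℤ), -(i : ℤ)))

/-!
All cells of `E_n` lie on the antidiagonal `x + y = 0`. Since adjacent vertices have different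
colours `x + y mod 2`, inferior and superior diagonals alternate along an embroidery, and every
superior diagonal has both ends on the line `x + y = 1`. Reading off `x`-coordinates on that line, a
closed embroidery becomes a closed walk `w` on `ℤ` whose step `p` stays within `{k, k + 1}`, where
`(k, -k)` is the cell of the `p`-th diagonal; superior diagonals move between `k` and `k + 1`.

A closed walk crosses the threshold `k + 1/2` an even number of times and only the two diagonals of
`(k, -k)` can cross it, so the inferior one crosses it too, and it is the first step to do so.
Hence `w` moves by `±1`, and since inferior diagonals sit at even positions, `w` has the same parity
at the start of all of them. For three consecutive cells this yields two neighbouring cells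
`(k, -k)`, `(k + 1, -k - 1)` whose inferior diagonals start at `k` and `k + 2`. Whichever comes
first, the walk must then cross the threshold of the other cell before that cell's inferior
diagonal.
-/

open Finset

theorem even_card_filter_not_iff_succ (P : ℕ → Prop) [DecidablePred P] {N : ℕ}
    (h : P N ↔ P 0) : Even #{p ∈ range N | ¬(P p ↔ P (p + 1))} := by
  suffices ∀ N, (Even #{p ∈ range N | ¬(P p ↔ P (p + 1))} ↔ (P N ↔ P 0)) from (this N).2 h
  intro N
  induction N with
  | zero => simp
  | succ N ih =>
    rw [range_add_one, filter_insert]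
    split_ifs with hN
    · rw [ih]
      tauto
    · rw [card_insert_of_notMem (by simp), Nat.even_add_one, ih]
      tauto

theorem exists_not_iff_succ_of_not_iff (P : ℕ → Prop) {i j : ℕ} (hij : i ≤ j)
    (h : ¬(P i ↔ P j)) : ∃ p, i ≤ p ∧ p < j ∧ ¬(P p ↔ P (p + 1)) := by
  induction j, hij using Nat.le_induction with
  | base => exact absurd Iff.rfl h
  | succ j hij ih =>
    by_cases hj : P j ↔ P (j + 1)
    · obtain ⟨p, hip, hpj, hp⟩ := ih (by rwa [hj])
      exact ⟨p, hip, by omega, hp⟩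
    · exact ⟨j, hij, by omega, hj⟩

theorem Int.sq_add_sq_eq_one {a b : ℤ} (h : a ^ 2 + b ^ 2 = 1) :
    (a = 0 ∧ (b = 1 ∨ b = -1)) ∨ (b = 0 ∧ (a = 1 ∨ a = -1)) := by
  have ha : -1 ≤ a ∧ a ≤ 1 := by constructor <;> nlinarith [sq_nonneg b]
  have hb : -1 ≤ b ∧ b ≤ 1 := by constructor <;> nlinarith [sq_nonneg a]
  obtain ⟨ha₁, ha₂⟩ := ha
  obtain ⟨hb₁, hb₂⟩ := hb
  interval_cases a <;> interval_cases b <;> simp_all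

theorem Adj.symm {u v : ℤ × ℤ} (h : Adj u v) : Adj v u := by
  unfold Adj at *
  linarith

theorem Adj.cases {u v : ℤ × ℤ} (h : Adj u v) :
    (u.1 = v.1 ∧ (u.2 = v.2 + 1 ∨ u.2 + 1 = v.2)) ∨
      (u.2 = v.2 ∧ (u.1 = v.1 + 1 ∨ u.1 + 1 = v.1)) := by
  rcases Int.sq_add_sq_eq_one h with ⟨h1, h2⟩ | ⟨h1, h2⟩ <;> omega

theorem Adj.emod_two_ne {u v : ℤ × ℤ} (h : Adj u v) : (u.1 + u.2) % 2 ≠ (v.1 + v.2) % 2 := by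
  rcases h.cases with ⟨h1, h2⟩ | ⟨h1, h2⟩ <;> omega

theorem emod_two_of_mem_infDiag {v c : ℤ × ℤ} (hv : v ∈ infDiag c) :
    (v.1 + v.2) % 2 = (c.1 + c.2) % 2 := by
  rcases Sym2.mem_iff.1 hv with hv | hv <;> simp only [Prod.ext_iff] at hv <;> omega

theorem add_of_mem_supDiag {v c : ℤ × ℤ} (hv : v ∈ supDiag c) :
    v.1 + v.2 = c.1 + c.2 + 1 := by
  rcases Sym2.mem_iff.1 hv with hv | hv <;> simp only [Prod.ext_iff] at hv <;> omega

theorem infDiag_ne_supDiag {c c' : ℤ × ℤ} (h : (c.1 + c.2) % 2 = (c'.1 + c'.2) % 2) :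
    infDiag c ≠ supDiag c' := by
  intro hcc'
  have := add_of_mem_supDiag (hcc' ▸ Sym2.mem_mk_left _ _ : c ∈ supDiag c')
  omega

theorem Adj.fst_eq_or_eq_add_one {u v c : ℤ × ℤ} (h : Adj u v) (hu : u.1 + u.2 = c.1 + c.2 + 1)
    (hv : v ∈ infDiag c) : u.1 = c.1 ∨ u.1 = c.1 + 1 := by
  rcases Sym2.mem_iff.1 hv with hv | hv <;> simp only [Prod.ext_iff] at hv <;>
    rcases h.cases with ⟨h1, h2⟩ | ⟨h1, h2⟩ <;> omega

theorem diagOf_eq_supDiag_iff {e : (ℤ × ℤ) × (ℤ × ℤ)} {c : ℤ × ℤ} :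
    diagOf e = supDiag c ↔ (e.1 = (c.1, c.2 + 1) ∧ e.2 = (c.1 + 1, c.2)) ∨
      (e.1 = (c.1 + 1, c.2) ∧ e.2 = (c.1, c.2 + 1)) :=
  Sym2.eq_iff

theorem fst_mem_diagOf (e : (ℤ × ℤ) × (ℤ × ℤ)) : e.1 ∈ diagOf e := Sym2.mem_mk_left _ _

theorem snd_mem_diagOf (e : (ℤ × ℤ) × (ℤ × ℤ)) : e.2 ∈ diagOf e := Sym2.mem_mk_right _ _

section Antidiagonal

variable {C : Finset (ℤ × ℤ)} {d : ℕ → (ℤ × ℤ) × (ℤ × ℤ)}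

theorem IsEmbroidery.exists_cell (hC : ∀ c ∈ C, c.1 + c.2 = 0) (hd : IsEmbroidery C d) {p : ℕ}
    (hp : p < 2 * #C) :
    ∃ c ∈ C, (Even p ∧ diagOf (d p) = infDiag c) ∨ (Odd p ∧ diagOf (d p) = supDiag c) := by
  obtain ⟨hcell, hinf, -, hord, hadj⟩ := hd
  induction p with
  | zero =>
    obtain ⟨c, hc, hi | hs⟩ := hcell 0 hp
    · exact ⟨c, hc, .inl ⟨⟨0, rfl⟩, hi⟩⟩
    · obtain ⟨i, ⟨hi, hdi⟩, -⟩ := hinf c hc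
      exact absurd (hord c hc i 0 hi hp hdi hs) (Nat.not_lt_zero i)
  | succ q ih =>
    have hpar := (hadj q hp).emod_two_ne
    obtain ⟨c, hc, ⟨hq, hqi⟩ | ⟨hq, hqs⟩⟩ := ih (by omega) <;>
      obtain ⟨c', hc', hi | hs⟩ := hcell (q + 1) hp
    · have := emod_two_of_mem_infDiag (hqi ▸ snd_mem_diagOf (d q))
      have := emod_two_of_mem_infDiag (hi ▸ fst_mem_diagOf (d (q + 1)))
      have := hC c hc
      have := hC c' hc'
      omega
    · exact ⟨c', hc', .inr ⟨hq.add_one, hs⟩⟩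
    · exact ⟨c', hc', .inl ⟨hq.add_one, hi⟩⟩
    · have := add_of_mem_supDiag (hqs ▸ snd_mem_diagOf (d q))
      have := add_of_mem_supDiag (hs ▸ fst_mem_diagOf (d (q + 1)))
      have := hC c hc
      have := hC c' hc'
      omega

theorem IsEmbroidery.even_of_diagOf_eq_infDiag (hC : ∀ c ∈ C, c.1 + c.2 = 0)
    (hd : IsEmbroidery C d) {p : ℕ} (hp : p < 2 * #C) {c : ℤ × ℤ} (hc : c ∈ C)
    (h : diagOf (d p) = infDiag c) : Even p := by
  obtain ⟨c', hc', ⟨hpe, -⟩ | ⟨-, hs⟩⟩ := hd.exists_cell hC hp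
  · exact hpe
  · exact absurd (h.symm.trans hs) (infDiag_ne_supDiag (by rw [hC c hc, hC c' hc']))

theorem IsEmbroidery.odd_of_diagOf_eq_supDiag (hC : ∀ c ∈ C, c.1 + c.2 = 0)
    (hd : IsEmbroidery C d) {p : ℕ} (hp : p < 2 * #C) {c : ℤ × ℤ} (hc : c ∈ C)
    (h : diagOf (d p) = supDiag c) : Odd p := by
  obtain ⟨c', hc', ⟨-, hi⟩ | ⟨hpo, -⟩⟩ := hd.exists_cell hC hp
  · exact absurd (hi.symm.trans h) (infDiag_ne_supDiag (by rw [hC c hc, hC c' hc']))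
  · exact hpo

theorem IsEmbroidery.add_eq_one_of_odd (hC : ∀ c ∈ C, c.1 + c.2 = 0) (hd : IsEmbroidery C d)
    {p : ℕ} (hp : p < 2 * #C) (hpo : Odd p) :
    (d p).1.1 + (d p).1.2 = 1 ∧ (d p).2.1 + (d p).2.2 = 1 := by
  obtain ⟨c, hc, ⟨hpe, -⟩ | ⟨-, hs⟩⟩ := hd.exists_cell hC hp
  · exact absurd hpe (Nat.not_even_iff_odd.2 hpo)
  · have := hC c hc
    have := add_of_mem_supDiag (hs ▸ fst_mem_diagOf (d p))
    have := add_of_mem_supDiag (hs ▸ snd_mem_diagOf (d p))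
    omega

variable (C d) in
/-- The odd-indexed diagonals of an embroidery of a configuration on the antidiagonal
`x + y = 0` are superior, with both ends on the line `x + y = 1`. `shadowWalk C d p` is the
`x`-coordinate of the point of that line reached just before `d p`: the start of `d p` for odd
`p`, the end of `d (p - 1)` for even `p`, read cyclically at `p = 0`. -/
def shadowWalk : ℕ → ℤ
  | 0 => (d (2 * #C - 1)).2.1
  | p + 1 => if Even p then (d (p + 1)).1.1 else (d p).2.1

variable (C) in
theorem shadowWalk_of_odd {p : ℕ} (hp : Odd p) : shadowWalk C d p = (d p).1.1 := by
  obtain ⟨q, rfl⟩ := hp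
  simp [shadowWalk]

variable (C) in
theorem shadowWalk_succ_of_odd {p : ℕ} (hp : Odd p) : shadowWalk C d (p + 1) = (d p).2.1 := by
  simp [shadowWalk, Nat.not_even_iff_odd.2 hp]

variable (C) in
theorem shadowWalk_succ_of_even {p : ℕ} (hp : Even p) :
    shadowWalk C d (p + 1) = (d (p + 1)).1.1 := by
  simp [shadowWalk, hp]

theorem shadowWalk_two_mul_card : shadowWalk C d (2 * #C) = shadowWalk C d 0 := by
  rcases Nat.eq_zero_or_pos #C with h | h
  · rw [h]
  · obtain ⟨q, hq⟩ : ∃ q, 2 * #C = q + 1 := ⟨2 * #C - 1, by omega⟩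
    rw [hq, shadowWalk_succ_of_odd C (by rw [Nat.odd_iff]; omega)]
    simp [shadowWalk, hq]

variable (C) in
theorem shadowWalk_of_supDiag {p : ℕ} (hp : Odd p) {c : ℤ × ℤ} (h : diagOf (d p) = supDiag c) :
    (shadowWalk C d p = c.1 ∧ shadowWalk C d (p + 1) = c.1 + 1) ∨
      (shadowWalk C d p = c.1 + 1 ∧ shadowWalk C d (p + 1) = c.1) := by
  rw [shadowWalk_of_odd C hp, shadowWalk_succ_of_odd C hp]
  rcases diagOf_eq_supDiag_iff.1 h with ⟨h₁, h₂⟩ | ⟨h₁, h₂⟩ <;> simp [h₁, h₂]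

variable (hC : ∀ c ∈ C, c.1 + c.2 = 0)
include hC

theorem IsClosedEmbroidery.shadowWalk_mem_of_infDiag (hd : IsClosedEmbroidery C d) {p : ℕ}
    (hp : p < 2 * #C) (hpe : Even p) {c : ℤ × ℤ} (hc : c ∈ C) (h : diagOf (d p) = infDiag c) :
    shadowWalk C d p ∈ Set.Icc c.1 (c.1 + 1) ∧
      shadowWalk C d (p + 1) ∈ Set.Icc c.1 (c.1 + 1) := by
  obtain ⟨hemb, hclose⟩ := hd
  have hstep := hemb.2.2.2.2
  obtain ⟨u, hu, husum, hadj⟩ :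
      ∃ u : ℤ × ℤ, u.1 = shadowWalk C d p ∧ u.1 + u.2 = 1 ∧ Adj u (d p).1 := by
    rcases p with _ | q
    · exact ⟨_, rfl, (hemb.add_eq_one_of_odd hC (by omega) (by rw [Nat.odd_iff]; omega)).2,
        hclose⟩
    · have hq : Odd q := by simpa [Nat.even_add_one] using hpe
      exact ⟨_, (shadowWalk_succ_of_odd C hq).symm, (hemb.add_eq_one_of_odd hC (by omega) hq).2,
        hstep q hp⟩
  have hp₁ : p + 1 < 2 * #C := by rcases hpe with ⟨r, rfl⟩; omega
  have hv := hemb.add_eq_one_of_odd hC hp₁ hpe.add_one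
  have hc₀ := hC c hc
  have h₁ := hadj.fst_eq_or_eq_add_one (by omega) (h ▸ fst_mem_diagOf (d p))
  have h₂ := (hstep p hp₁).symm.fst_eq_or_eq_add_one (by omega) (h ▸ snd_mem_diagOf (d p))
  rw [shadowWalk_succ_of_even C hpe, ← hu, Set.mem_Icc, Set.mem_Icc]
  omega

theorem IsClosedEmbroidery.exists_cell_shadowWalk (hd : IsClosedEmbroidery C d) {p : ℕ}
    (hp : p < 2 * #C) :
    ∃ c ∈ C, ((Even p ∧ diagOf (d p) = infDiag c) ∨ (Odd p ∧ diagOf (d p) = supDiag c)) ∧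
      shadowWalk C d p ∈ Set.Icc c.1 (c.1 + 1) ∧
      shadowWalk C d (p + 1) ∈ Set.Icc c.1 (c.1 + 1) := by
  obtain ⟨c, hc, hcell⟩ := hd.1.exists_cell hC hp
  refine ⟨c, hc, hcell, ?_⟩
  rcases hcell with ⟨hpe, hi⟩ | ⟨hpo, hs⟩
  · exact hd.shadowWalk_mem_of_infDiag hC hp hpe hc hi
  · simp only [Set.mem_Icc]
    rcases shadowWalk_of_supDiag C hpo hs with ⟨h₁, h₂⟩ | ⟨h₁, h₂⟩ <;> omega

theorem IsClosedEmbroidery.diagOf_eq_of_crossing (hd : IsClosedEmbroidery C d) {q : ℕ}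
    (hq : q < 2 * #C) {c : ℤ × ℤ} (hc : c ∈ C)
    (hx : ¬(shadowWalk C d q ≤ c.1 ↔ shadowWalk C d (q + 1) ≤ c.1)) :
    diagOf (d q) = infDiag c ∨ diagOf (d q) = supDiag c := by
  obtain ⟨c', hc', hcell, h₁, h₂⟩ := hd.exists_cell_shadowWalk hC hq
  have hfst : c'.1 = c.1 := by simp only [Set.mem_Icc] at h₁ h₂; omega
  obtain rfl : c' = c := Prod.ext hfst (by linarith [hC c hc, hC c' hc'])
  rcases hcell with ⟨-, h⟩ | ⟨-, h⟩
  exacts [.inl h, .inr h]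

theorem IsClosedEmbroidery.shadowWalk_ne_succ_of_infDiag (hd : IsClosedEmbroidery C d) {p : ℕ}
    (hp : p < 2 * #C) {c : ℤ × ℤ} (hc : c ∈ C) (h : diagOf (d p) = infDiag c) :
    shadowWalk C d p ≠ shadowWalk C d (p + 1) := by
  have ⟨⟨_, hinf, hsup, _⟩, _⟩ := hd
  obtain ⟨b, ⟨hb, hdb⟩, -⟩ := hsup c hc
  set S := {q ∈ range (2 * #C) | ¬(shadowWalk C d q ≤ c.1 ↔ shadowWalk C d (q + 1) ≤ c.1)}
  have hS : Even #S := even_card_filter_not_iff_succ _ (by rw [shadowWalk_two_mul_card])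
  have hbS : b ∈ S := by
    rw [mem_filter, mem_range]
    rcases shadowWalk_of_supDiag C (hd.1.odd_of_diagOf_eq_supDiag hC hb hc hdb) hdb with
      ⟨h₁, h₂⟩ | ⟨h₁, h₂⟩ <;> rw [h₁, h₂] <;> omega
  intro hpw
  have : S = {b} := by
    refine eq_singleton_iff_unique_mem.2 ⟨hbS, fun q hqS => ?_⟩
    obtain ⟨hq, hx⟩ := mem_filter.1 hqS
    rw [mem_range] at hq
    rcases hd.diagOf_eq_of_crossing hC hq hc hx with hi | hs
    · obtain rfl := (hinf c hc).unique ⟨hq, hi⟩ ⟨hp, h⟩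
      simp [hpw] at hx
    · exact (hsup c hc).unique ⟨hq, hs⟩ ⟨hb, hdb⟩
  rw [this, card_singleton] at hS
  exact Nat.not_even_one hS

theorem IsClosedEmbroidery.shadowWalk_succ (hd : IsClosedEmbroidery C d) {p : ℕ}
    (hp : p < 2 * #C) :
    shadowWalk C d (p + 1) = shadowWalk C d p + 1 ∨
      shadowWalk C d (p + 1) = shadowWalk C d p - 1 := by
  obtain ⟨c, hc, ⟨-, hi⟩ | ⟨hpo, hs⟩, h₁, h₂⟩ := hd.exists_cell_shadowWalk hC hp
  · have := hd.shadowWalk_ne_succ_of_infDiag hC hp hc hi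
    simp only [Set.mem_Icc] at h₁ h₂
    omega
  · rcases shadowWalk_of_supDiag C hpo hs with ⟨h₁, h₂⟩ | ⟨h₁, h₂⟩ <;> omega

theorem IsClosedEmbroidery.shadowWalk_add_emod_two (hd : IsClosedEmbroidery C d) {p : ℕ}
    (hp : p ≤ 2 * #C) : (shadowWalk C d p + p) % 2 = shadowWalk C d 0 % 2 := by
  induction p with
  | zero => simp
  | succ q ih =>
    have := ih (by omega)
    push_cast
    rcases hd.shadowWalk_succ hC (p := q) (by omega) with h | h <;> omega

theorem IsClosedEmbroidery.le_of_crossing (hd : IsClosedEmbroidery C d) {c : ℤ × ℤ} (hc : c ∈ C)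
    {a : ℕ} (ha : a < 2 * #C) (hda : diagOf (d a) = infDiag c) {q : ℕ} (hq : q < 2 * #C)
    (hx : ¬(shadowWalk C d q ≤ c.1 ↔ shadowWalk C d (q + 1) ≤ c.1)) : a ≤ q := by
  have ⟨⟨_, hinf, _, hord, _⟩, _⟩ := hd
  rcases hd.diagOf_eq_of_crossing hC hq hc hx with hi | hs
  · exact ((hinf c hc).unique ⟨ha, hda⟩ ⟨hq, hi⟩).le
  · exact (hord c hc a q ha hq hda hs).le

theorem IsClosedEmbroidery.shadowWalk_ne_add_two (hd : IsClosedEmbroidery C d) {k : ℤ}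
    (hk : (k, -k) ∈ C) (hk₁ : (k + 1, -(k + 1)) ∈ C) {a a' : ℕ} (ha : a < 2 * #C)
    (ha' : a' < 2 * #C) (hda : diagOf (d a) = infDiag (k, -k))
    (hda' : diagOf (d a') = infDiag (k + 1, -(k + 1))) (hwa : shadowWalk C d a = k) :
    shadowWalk C d a' ≠ k + 2 := by
  intro hwa'
  rcases lt_or_gt_of_ne (show a ≠ a' by rintro rfl; omega) with hlt | hlt
  · obtain ⟨q, -, hqa', hx⟩ := exists_not_iff_succ_of_not_iff
      (fun q => shadowWalk C d q ≤ k + 1) hlt.le (by simp only [hwa, hwa']; omega)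
    exact absurd (hd.le_of_crossing hC hk₁ ha' hda' (by omega) hx) (by omega)
  · obtain ⟨q, -, hqa, hx⟩ := exists_not_iff_succ_of_not_iff
      (fun q => shadowWalk C d q ≤ k) hlt.le (by simp only [hwa, hwa']; omega)
    exact absurd (hd.le_of_crossing hC hk ha hda (by omega) hx) (by omega)

theorem not_stronglyBrodable_of_antidiagonal {k : ℤ} (hk₀ : (k, -k) ∈ C)
    (hk₁ : (k + 1, -(k + 1)) ∈ C) (hk₂ : (k + 2, -(k + 2)) ∈ C) : ¬StronglyBrodable C := by
  rintro ⟨d, hd⟩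
  have hinf : ∀ {j : ℤ}, (j, -j) ∈ C → ∃ a < 2 * #C, diagOf (d a) = infDiag (j, -j) ∧
      j ≤ shadowWalk C d a ∧ shadowWalk C d a ≤ j + 1 ∧
      shadowWalk C d a % 2 = shadowWalk C d 0 % 2 := by
    intro j hj
    obtain ⟨a, ⟨ha, hda⟩, -⟩ := hd.1.2.1 _ hj
    obtain ⟨r, rfl⟩ := hd.1.even_of_diagOf_eq_infDiag hC ha hj hda
    have hpar := hd.shadowWalk_add_emod_two hC ha.le
    have ⟨h₁, h₂⟩ := (hd.shadowWalk_mem_of_infDiag hC ha ⟨r, rfl⟩ hj hda).1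
    push_cast at hpar
    exact ⟨r + r, ha, hda, h₁, h₂, by omega⟩
  obtain ⟨a₀, ha₀, hd₀, hw₀⟩ := hinf hk₀
  obtain ⟨a₁, ha₁, hd₁, hw₁⟩ := hinf hk₁
  obtain ⟨a₂, ha₂, hd₂, hw₂⟩ := hinf hk₂
  by_cases hpar : shadowWalk C d 0 % 2 = k % 2
  · exact hd.shadowWalk_ne_add_two hC hk₀ hk₁ ha₀ ha₁ hd₀ hd₁ (by omega) (by omega)
  · refine hd.shadowWalk_ne_add_two hC hk₁ (by rwa [add_assoc]) ha₁ ha₂ hd₁ ?_ (by omega)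
      (by omega)
    rwa [add_assoc]

end Antidiagonal

theorem mem_staircase {n : ℕ} {c : ℤ × ℤ} : c ∈ staircase n ↔ 0 ≤ c.1 ∧ c.1 < n ∧ c.2 = -c.1 := by
  simp only [staircase, mem_image, mem_range, Prod.ext_iff]
  constructor
  · rintro ⟨i, hi, h₁, h₂⟩
    omega
  · rintro ⟨h₀, h₁, h₂⟩
    exact ⟨c.1.toNat, by omega, by omega, by omega⟩

/-- For every `n ≥ 3`, the descending staircase `E_n` is not strongly brodable. -/
theorem staircase_not_stronglyBrodable (n : ℕ) (hn : 3 ≤ n) :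
    ¬ StronglyBrodable (staircase n) :=
  not_stronglyBrodable_of_antidiagonal (fun c hc => by have := mem_staircase.1 hc; omega)
    (k := 0) (mem_staircase.2 (by omega)) (mem_staircase.2 (by omega)) (mem_staircase.2 (by omega))
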